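/- arXiv:1108.4030 — 4 statements merged into one kernel-verified Lean document; each statement's English description precedes it below -/
import Mathlib

section
/- (Cerveau–Déserti) The Cremona group cannot be embedded into a linear group over a field of characteristic zero: for every field k of characteristic zero and every integer n ≥ 1, there is no injective group homomorphism from Bir(ℙ²) into GL_n(k). -/
noncomputable section

open MvPolynomial

/-- The field ℂ(x,y) of rational functions in two variables, realized as the fraction
field of the polynomial ring ℂ[x,y]. -/
abbrev K2 : Type := FractionRing (MvPolynomial (Fin 2) ℂ)

/-- The Cremona group Bir(ℙ²), identified with the group (under composition) of
ℂ-algebra automorphisms of the field ℂ(x,y). -/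
abbrev Cremona : Type := K2 ≃ₐ[ℂ] K2

/-- The rational function x. -/
def xx : K2 := algebraMap (MvPolynomial (Fin 2) ℂ) K2 (X 0)

/-- The rational function y. -/
def yy : K2 := algebraMap (MvPolynomial (Fin 2) ℂ) K2 (X 1)

/-- Constants, viewed inside ℂ(x,y). -/
def cC (c : ℂ) : K2 := algebraMap ℂ K2 c

abbrev R2 : Type := MvPolynomial (Fin 2) ℂ

def ee : R2 →ₐ[ℂ] K2 := IsScalarTower.toAlgHom ℂ R2 K2

lemma ee_apply (P : R2) : ee P = algebraMap R2 K2 P := rfl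

lemma ee_inj : Function.Injective ee := IsFractionRing.injective R2 K2

lemma xx_def : xx = ee (X 0) := rfl
lemma yy_def : yy = ee (X 1) := rfl

lemma ee_C (z : ℂ) : ee (C z) = cC z := by
  rw [ee_apply, cC, ← MvPolynomial.algebraMap_eq, ← IsScalarTower.algebraMap_apply]

lemma xx_ne_zero : xx ≠ 0 := by
  rw [xx_def]
  intro h
  exact MvPolynomial.X_ne_zero 0 (ee_inj (by simpa using h))

lemma yy_ne_zero : yy ≠ 0 := by
  rw [yy_def]
  intro h
  exact MvPolynomial.X_ne_zero 1 (ee_inj (by simpa using h))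

lemma cC_inj : Function.Injective cC := (algebraMap ℂ K2).injective

/-- K2-AlgHoms are determined by values on xx and yy. -/
lemma algHom_ext_K2 {F G : K2 →ₐ[ℂ] K2} (h0 : F xx = G xx) (h1 : F yy = G yy) : F = G := by
  have : F.toRingHom = G.toRingHom := by
    apply IsLocalization.ringHom_ext (nonZeroDivisors R2)
    apply MvPolynomial.ringHom_ext
    · intro c
      show F (algebraMap R2 K2 (MvPolynomial.C c)) = G (algebraMap R2 K2 (MvPolynomial.C c))
      have hc : (algebraMap R2 K2 (MvPolynomial.C c)) = algebraMap ℂ K2 c := by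
        rw [← MvPolynomial.algebraMap_eq, ← IsScalarTower.algebraMap_apply]
      rw [hc, AlgHom.commutes, AlgHom.commutes]
    · intro i
      fin_cases i
      · exact h0
      · exact h1
  exact AlgHom.coe_ringHom_injective this

lemma cremona_ext {F G : Cremona} (h0 : F xx = G xx) (h1 : F yy = G yy) : F = G := by
  have h := algHom_ext_K2 (F := F.toAlgHom) (G := G.toAlgHom) h0 h1
  exact AlgEquiv.ext fun x => DFunLike.congr_fun h x

lemma comp_eq_id {F G : K2 →ₐ[ℂ] K2}
    (h : ∀ P : R2, F (G (algebraMap R2 K2 P)) = algebraMap R2 K2 P) :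
    F.comp G = AlgHom.id ℂ K2 := by
  have : (F.comp G).toRingHom = (AlgHom.id ℂ K2).toRingHom := by
    apply IsLocalization.ringHom_ext (nonZeroDivisors R2)
    refine RingHom.ext fun P => ?_
    simpa using h P
  exact AlgHom.coe_ringHom_injective this

/-- Build a Cremona element from a pair of injective alghoms with mutually inverse lifts. -/
def mkAut (f g : R2 →ₐ[ℂ] K2) (hf : Function.Injective f) (hg : Function.Injective g)
    (h1 : (IsFractionRing.liftAlgHom (K := K2) hf).comp g = ee)
    (h2 : (IsFractionRing.liftAlgHom (K := K2) hg).comp f = ee) : Cremona :=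
  AlgEquiv.ofAlgHom (IsFractionRing.liftAlgHom hf) (IsFractionRing.liftAlgHom hg)
    (comp_eq_id fun P => by
      rw [show (IsFractionRing.liftAlgHom (K := K2) hg) (algebraMap R2 K2 P) = g P from
        IsFractionRing.lift_algebraMap hg P]
      have := DFunLike.congr_fun h1 P
      simpa [ee_apply] using this)
    (comp_eq_id fun P => by
      rw [show (IsFractionRing.liftAlgHom (K := K2) hf) (algebraMap R2 K2 P) = f P from
        IsFractionRing.lift_algebraMap hf P]
      have := DFunLike.congr_fun h2 P
      simpa [ee_apply] using this)

lemma mkAut_apply (f g : R2 →ₐ[ℂ] K2) (hf : Function.Injective f) (hg : Function.Injective g)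
    (h1 : (IsFractionRing.liftAlgHom (K := K2) hf).comp g = ee)
    (h2 : (IsFractionRing.liftAlgHom (K := K2) hg).comp f = ee) (P : R2) :
    mkAut f g hf hg h1 h2 (algebraMap R2 K2 P) = f P :=
  IsFractionRing.lift_algebraMap hf P

lemma injUP (U U' : R2 →ₐ[ℂ] R2) (h : U'.comp U = AlgHom.id ℂ R2) :
    Function.Injective (ee.comp U) := by
  have hU : Function.Injective U := by
    have : Function.Injective (⇑U' ∘ ⇑U) := by
      rw [← AlgHom.coe_comp, h]; exact fun a b hab => hab
    exact this.of_comp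
  exact ee_inj.comp hU

lemma liftpoly (U U' : R2 →ₐ[ℂ] R2) (hUU' : U.comp U' = AlgHom.id ℂ R2)
    (hU'U : U'.comp U = AlgHom.id ℂ R2) :
    (IsFractionRing.liftAlgHom (K := K2) (injUP U U' hU'U)).comp (ee.comp U') = ee := by
  apply AlgHom.ext; intro P
  show IsFractionRing.liftAlgHom (K := K2) (injUP U U' hU'U) (ee (U' P)) = ee P
  rw [ee_apply (U' P), show (IsFractionRing.liftAlgHom (K := K2) (injUP U U' hU'U))
      (algebraMap R2 K2 (U' P)) = (ee.comp U) (U' P) from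
      IsFractionRing.lift_algebraMap (injUP U U' hU'U) (U' P)]
  show ee (U (U' P)) = ee P
  rw [show U (U' P) = (U.comp U') P from rfl, hUU']
  rfl

/-- Build a Cremona element from mutually inverse polynomial substitutions. -/
def mkAutPoly (U U' : R2 →ₐ[ℂ] R2) (hUU' : U.comp U' = AlgHom.id ℂ R2)
    (hU'U : U'.comp U = AlgHom.id ℂ R2) : Cremona :=
  mkAut (ee.comp U) (ee.comp U') (injUP U U' hU'U) (injUP U' U hUU')
    (liftpoly U U' hUU' hU'U) (liftpoly U' U hU'U hUU')

lemma mkAutPoly_apply (U U' : R2 →ₐ[ℂ] R2) (hUU' : U.comp U' = AlgHom.id ℂ R2)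
    (hU'U : U'.comp U = AlgHom.id ℂ R2) (P : R2) :
    mkAutPoly U U' hUU' hU'U (algebraMap R2 K2 P) = ee (U P) :=
  mkAut_apply _ _ _ _ _ _ P

/-! The monomial automorphism `a : x ↦ x, y ↦ x y`. -/

def Sa : R2 →ₐ[ℂ] R2 := aeval ![X 0, X 0 * X 1]
def fa : R2 →ₐ[ℂ] K2 := ee.comp Sa
def ga : R2 →ₐ[ℂ] K2 := aeval ![xx, yy * xx⁻¹]

lemma ga_comp_Sa : ga.comp Sa = ee := by
  apply MvPolynomial.algHom_ext
  intro i
  fin_cases i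
  · simp [ga, Sa, ee_apply, xx]
  · show ga (Sa (X 1)) = ee (X 1)
    have h1 : Sa (X 1) = X 0 * X 1 := by simp [Sa]
    have h2 : ga (X 0 * X 1) = xx * (yy * xx⁻¹) := by simp [ga]
    rw [h1, h2, ← yy_def]
    field_simp
    exact mul_div_cancel_left₀ yy xx_ne_zero

lemma Sa_inj : Function.Injective Sa := by
  have : Function.Injective (⇑ga ∘ ⇑Sa) := by
    rw [← AlgHom.coe_comp, ga_comp_Sa]; exact ee_inj
  exact this.of_comp

lemma fa_inj : Function.Injective fa := ee_inj.comp Sa_inj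

lemma fa_X0 : fa (X 0) = xx := by simp [fa, Sa, xx_def]
lemma fa_X1 : fa (X 1) = xx * yy := by
  show ee (Sa (X 1)) = xx * yy
  have h1 : Sa (X 1) = X 0 * X 1 := by simp [Sa]
  rw [h1, map_mul, ← xx_def, ← yy_def]

lemma h1a : (IsFractionRing.liftAlgHom (K := K2) fa_inj).comp ga = ee := by
  apply MvPolynomial.algHom_ext
  intro i
  have hxx : (IsFractionRing.liftAlgHom (K := K2) fa_inj) xx = xx := by
    rw [xx_def, ee_apply]
    rw [show (IsFractionRing.liftAlgHom (K := K2) fa_inj) (algebraMap R2 K2 (X 0)) = fa (X 0)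
      from IsFractionRing.lift_algebraMap fa_inj (X 0), fa_X0]
    rfl
  have hyy : (IsFractionRing.liftAlgHom (K := K2) fa_inj) yy = xx * yy := by
    rw [yy_def, ee_apply]
    rw [show (IsFractionRing.liftAlgHom (K := K2) fa_inj) (algebraMap R2 K2 (X 1)) = fa (X 1)
      from IsFractionRing.lift_algebraMap fa_inj (X 1), fa_X1]
    rfl
  fin_cases i
  · show (IsFractionRing.liftAlgHom (K := K2) fa_inj) (ga (X 0)) = ee (X 0)
    have : ga (X 0) = xx := by simp [ga]
    rw [this, hxx, xx_def]
  · show (IsFractionRing.liftAlgHom (K := K2) fa_inj) (ga (X 1)) = ee (X 1)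
    have : ga (X 1) = yy * xx⁻¹ := by simp [ga]
    rw [this, map_mul, map_inv₀, hxx, hyy, ← yy_def]
    field_simp
    exact mul_div_cancel_left₀ yy xx_ne_zero

lemma ga_inj : Function.Injective ga := by
  have : Function.Injective
      (⇑(IsFractionRing.liftAlgHom (K := K2) fa_inj) ∘ ⇑ga) := by
    rw [← AlgHom.coe_comp, h1a]; exact ee_inj
  exact this.of_comp

lemma h2a : (IsFractionRing.liftAlgHom (K := K2) ga_inj).comp fa = ee := by
  apply AlgHom.ext; intro P
  show (IsFractionRing.liftAlgHom (K := K2) ga_inj) (ee (Sa P)) = ee P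
  rw [ee_apply (Sa P),
    show (IsFractionRing.liftAlgHom (K := K2) ga_inj) (algebraMap R2 K2 (Sa P)) = ga (Sa P)
      from IsFractionRing.lift_algebraMap ga_inj (Sa P)]
  exact DFunLike.congr_fun ga_comp_Sa P

def aa : Cremona := mkAut fa ga fa_inj ga_inj h1a h2a

lemma aa_xx : aa xx = xx := by
  rw [xx_def, ee_apply]
  rw [show aa (algebraMap R2 K2 (X 0)) = fa (X 0) from mkAut_apply _ _ _ _ _ _ _, fa_X0]
  rfl

lemma aa_yy : aa yy = xx * yy := by
  rw [yy_def, ee_apply]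
  rw [show aa (algebraMap R2 K2 (X 1)) = fa (X 1) from mkAut_apply _ _ _ _ _ _ _, fa_X1]
  rfl

/-! Scaling automorphisms. -/

def Ub (z : ℂ) : R2 →ₐ[ℂ] R2 := aeval ![C z * X 0, X 1]
def Uc (z : ℂ) : R2 →ₐ[ℂ] R2 := aeval ![X 0, C z * X 1]

lemma Ub_comp (z w : ℂ) : (Ub z).comp (Ub w) = Ub (z * w) := by
  apply MvPolynomial.algHom_ext
  intro i
  fin_cases i <;> simp [Ub] <;> ring

lemma Uc_comp (z w : ℂ) : (Uc z).comp (Uc w) = Uc (z * w) := by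
  apply MvPolynomial.algHom_ext
  intro i
  fin_cases i <;> simp [Uc] <;> ring

lemma Ub_one : Ub 1 = AlgHom.id ℂ R2 := by
  apply MvPolynomial.algHom_ext
  intro i
  fin_cases i <;> simp [Ub]

lemma Uc_one : Uc 1 = AlgHom.id ℂ R2 := by
  apply MvPolynomial.algHom_ext
  intro i
  fin_cases i <;> simp [Uc]

def bb (z : ℂ) (hz : z ≠ 0) : Cremona :=
  mkAutPoly (Ub z) (Ub z⁻¹)
    (by rw [Ub_comp, mul_inv_cancel₀ hz, Ub_one])
    (by rw [Ub_comp, inv_mul_cancel₀ hz, Ub_one])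

def ccc (z : ℂ) (hz : z ≠ 0) : Cremona :=
  mkAutPoly (Uc z) (Uc z⁻¹)
    (by rw [Uc_comp, mul_inv_cancel₀ hz, Uc_one])
    (by rw [Uc_comp, inv_mul_cancel₀ hz, Uc_one])

lemma bb_xx (z : ℂ) (hz : z ≠ 0) : bb z hz xx = cC z * xx := by
  rw [xx_def, ee_apply, show bb z hz (algebraMap R2 K2 (X 0)) = ee (Ub z (X 0))
    from mkAutPoly_apply _ _ _ _ _]
  have : Ub z (X 0) = C z * X 0 := by simp [Ub]
  rw [this, map_mul, ee_C, ← xx_def]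
  rfl

lemma bb_yy (z : ℂ) (hz : z ≠ 0) : bb z hz yy = yy := by
  rw [yy_def, ee_apply, show bb z hz (algebraMap R2 K2 (X 1)) = ee (Ub z (X 1))
    from mkAutPoly_apply _ _ _ _ _]
  have : Ub z (X 1) = X 1 := by simp [Ub]
  rw [this, ← yy_def]
  rfl

lemma ccc_xx (z : ℂ) (hz : z ≠ 0) : ccc z hz xx = xx := by
  rw [xx_def, ee_apply, show ccc z hz (algebraMap R2 K2 (X 0)) = ee (Uc z (X 0))
    from mkAutPoly_apply _ _ _ _ _]
  have : Uc z (X 0) = X 0 := by simp [Uc]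
  rw [this, ← xx_def]
  rfl

lemma ccc_yy (z : ℂ) (hz : z ≠ 0) : ccc z hz yy = cC z * yy := by
  rw [yy_def, ee_apply, show ccc z hz (algebraMap R2 K2 (X 1)) = ee (Uc z (X 1))
    from mkAutPoly_apply _ _ _ _ _]
  have : Uc z (X 1) = C z * X 1 := by simp [Uc]
  rw [this, map_mul, ee_C, ← yy_def]
  rfl

lemma aut_cC (F : Cremona) (w : ℂ) : F (cC w) = cC w := F.commutes w

lemma cC_mul_inv (z : ℂ) (hz : z ≠ 0) : cC z * cC z⁻¹ = 1 := by
  rw [cC, cC, ← map_mul, mul_inv_cancel₀ hz, map_one]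

lemma rel_ca (z : ℂ) (hz : z ≠ 0) : ccc z hz * aa = aa * ccc z hz := by
  apply cremona_ext
  · simp only [AlgEquiv.mul_apply, aa_xx, ccc_xx]
  · simp only [AlgEquiv.mul_apply, aa_yy, ccc_yy, map_mul, ccc_xx, aut_cC]
    ring

lemma rel_cb (z w : ℂ) (hz : z ≠ 0) (hw : w ≠ 0) :
    ccc z hz * bb w hw = bb w hw * ccc z hz := by
  apply cremona_ext
  · simp only [AlgEquiv.mul_apply, bb_xx, ccc_xx, map_mul, aut_cC]
  · simp only [AlgEquiv.mul_apply, bb_yy, ccc_yy, map_mul, aut_cC]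

lemma rel_comm (z : ℂ) (hz : z ≠ 0) :
    aa * bb z hz = ccc z⁻¹ (inv_ne_zero hz) * (bb z hz * aa) := by
  apply cremona_ext
  · simp only [AlgEquiv.mul_apply, aa_xx, bb_xx, ccc_xx, map_mul, aut_cC]
  · simp only [AlgEquiv.mul_apply, aa_yy, bb_yy, bb_xx, ccc_yy, ccc_xx, map_mul, aut_cC]
    calc xx * yy = (cC z * cC z⁻¹) * (xx * yy) := by rw [cC_mul_inv z hz, one_mul]
      _ = cC z * xx * (cC z⁻¹ * yy) := by ring

lemma ccc_pow_xx (z : ℂ) (hz : z ≠ 0) (m : ℕ) : (ccc z hz ^ m) xx = xx := by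
  induction m with
  | zero => simp
  | succ m ih => rw [pow_succ, AlgEquiv.mul_apply, ccc_xx, ih]

lemma ccc_pow_yy (z : ℂ) (hz : z ≠ 0) (m : ℕ) : (ccc z hz ^ m) yy = cC (z ^ m) * yy := by
  induction m with
  | zero => simp [cC]
  | succ m ih =>
    rw [pow_succ, AlgEquiv.mul_apply, ccc_yy, map_mul, ih, aut_cC, ← mul_assoc,
      show cC z * cC (z ^ m) = cC (z ^ (m + 1)) from by
        rw [cC, cC, cC, ← map_mul, ← pow_succ']]

lemma ccc_pow_eq_one (z : ℂ) (hz : z ≠ 0) {p : ℕ} (hzp : z ^ p = 1) : ccc z hz ^ p = 1 := by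
  apply cremona_ext
  · rw [ccc_pow_xx, AlgEquiv.one_apply]
  · rw [ccc_pow_yy, AlgEquiv.one_apply, hzp, show cC 1 = 1 from map_one _, one_mul]

lemma ccc_ne_one (z : ℂ) (hz : z ≠ 0) (hz1 : z ≠ 1) : ccc z hz ≠ 1 := by
  intro h
  have h2 : ccc z hz yy = yy := by rw [h, AlgEquiv.one_apply]
  rw [ccc_yy] at h2
  apply hz1
  apply cC_inj
  rw [show cC 1 = 1 from map_one _]
  have := mul_right_cancel₀ yy_ne_zero (h2.trans (one_mul yy).symm)
  exact this


open Finset Module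

section EndLemma
variable {K : Type*} [Field K] [CharZero K] [IsAlgClosed K]
variable {V : Type*} [AddCommGroup V] [Module K V] [FiniteDimensional K V]

lemma end_lemma {n p : ℕ}
    (hp : p.Prime) (hn : n < p) (hdim : Module.finrank K V ≤ n)
    (fA fA' fB fB' g : Module.End K V)
    (hA : fA * fA' = 1) (hA2 : fA' * fA = 1) (hB : fB * fB' = 1) (hB2 : fB' * fB = 1)
    (hC : g = fA * fB * fA' * fB') (hCA : g * fA = fA * g) (hCB : g * fB = fB * g)
    (hgp : g ^ p = 1) : g = 1 := by
  by_contra hg1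
  haveI := Fact.mk hp
  -- commutation with inverses
  have comm_inv : ∀ u u' : Module.End K V, u * u' = 1 → u' * u = 1 →
      g * u = u * g → g * u' = u' * g := by
    intro u u' h1 h2 h3
    calc g * u' = u' * u * g * u' := by rw [h2, one_mul]
      _ = u' * g * u * u' := by rw [mul_assoc u' u g, ← h3, ← mul_assoc]
      _ = u' * g := by rw [mul_assoc, h1, mul_one]
  have hCA' : g * fA' = fA' * g := comm_inv fA fA' hA hA2 hCA
  have hCB' : g * fB' = fB' * g := comm_inv fB fB' hB hB2 hCB
  -- the geometric sum operator
  set Q : Module.End K V := ∑ j ∈ range p, g ^ j with hQ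
  have hgQ : (g - 1) * Q = 0 := by rw [hQ, mul_geom_sum, hgp, sub_self]
  have hQg : Q * g = g * Q := by
    simp only [hQ, Finset.sum_mul, Finset.mul_sum, pow_mul_comm']
  have hQker : LinearMap.ker Q ≠ ⊥ := by
    intro h
    have hinj : Function.Injective Q := LinearMap.ker_eq_bot.mp h
    have hsurj : Function.Surjective Q := LinearMap.injective_iff_surjective.mp hinj
    apply hg1
    have hz : ∀ v, (g - 1) v = 0 := by
      intro v
      obtain ⟨w, rfl⟩ := hsurj v
      calc (g - 1) (Q w) = ((g - 1) * Q) w := (Module.End.mul_apply _ _ _).symm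
        _ = 0 := by rw [hgQ]; rfl
    have : g - 1 = 0 := LinearMap.ext fun v => by simpa using hz v
    exact sub_eq_zero.mp this
  -- restrict g to ker Q, find eigenvalue
  have hinv : ∀ x ∈ LinearMap.ker Q, g x ∈ LinearMap.ker Q := by
    intro x hx
    simp only [LinearMap.mem_ker] at hx ⊢
    calc Q (g x) = (Q * g) x := (Module.End.mul_apply _ _ _).symm
      _ = g (Q x) := by rw [hQg]; rfl
      _ = 0 := by rw [hx, map_zero]
  haveI : Nontrivial (LinearMap.ker Q) :=
    Submodule.nontrivial_iff_ne_bot.mpr hQker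
  obtain ⟨μ, hμ⟩ := Module.End.exists_eigenvalue (g.restrict hinv)
  obtain ⟨w, hw⟩ := hμ.exists_hasEigenvector
  set v : V := (w : V) with hv
  have hv0 : v ≠ 0 := fun h => hw.2 (by exact_mod_cast Subtype.ext h)
  have hgv : g v = μ • v := by
    have := hw.apply_eq_smul
    have h2 := congrArg (Subtype.val) this
    simpa [LinearMap.restrict_apply] using h2
  have hvker : Q v = 0 := w.2
  -- powers
  have hpow : ∀ j, (g ^ j) v = μ ^ j • v := by
    intro j; induction j with
    | zero => simp
    | succ j ih =>
      rw [pow_succ, Module.End.mul_apply, hgv, map_smul, ih, smul_smul, ← pow_succ']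
  have hsum : (∑ j ∈ range p, μ ^ j) = 0 := by
    have : Q v = (∑ j ∈ range p, μ ^ j) • v := by
      rw [hQ, LinearMap.sum_apply, Finset.sum_smul]
      exact Finset.sum_congr rfl fun j _ => hpow j
    rw [hvker] at this
    rcases smul_eq_zero.mp this.symm with h | h
    · exact h
    · exact absurd h hv0
  have hμ1 : μ ≠ 1 := by
    intro h
    rw [h] at hsum
    simp only [one_pow, Finset.sum_const, Finset.card_range, nsmul_eq_mul, mul_one] at hsum
    exact (Nat.cast_ne_zero.mpr hp.ne_zero) hsum
  have hμp : μ ^ p = 1 := by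
    have := geom_sum_mul μ p
    rw [hsum, zero_mul] at this
    linear_combination -this
  have hord : orderOf μ = p := orderOf_eq_prime hμp hμ1
  -- eigenspace
  set E := g.eigenspace μ with hE
  have hvE : v ∈ E := Module.End.mem_eigenspace_iff.mpr hgv
  haveI : Nontrivial E := ⟨⟨⟨v, hvE⟩, 0, fun h => hv0 (by simpa using congrArg Subtype.val h)⟩⟩
  have hEinv : ∀ f0 : Module.End K V, g * f0 = f0 * g → ∀ x ∈ E, f0 x ∈ E := by
    intro f0 hf0 x hx
    rw [hE, Module.End.mem_eigenspace_iff] at hx ⊢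
    calc g (f0 x) = (g * f0) x := (Module.End.mul_apply _ _ _).symm
      _ = f0 (g x) := by rw [hf0]; rfl
      _ = μ • f0 x := by rw [hx, map_smul]
  have hAE := hEinv fA hCA
  have hA'E := hEinv fA' hCA'
  have hBE := hEinv fB hCB
  have hB'E := hEinv fB' hCB'
  set rA := fA.restrict hAE
  set rA' := fA'.restrict hA'E
  set rB := fB.restrict hBE
  set rB' := fB'.restrict hB'E
  have hres : ∀ (f1 f2 : Module.End K V) (h1 : ∀ x ∈ E, f1 x ∈ E) (h2 : ∀ x ∈ E, f2 x ∈ E)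
      (hcomp : f1 * f2 = 1), (f1.restrict h1) * (f2.restrict h2) = 1 := by
    intro f1 f2 h1 h2 hcomp
    ext x
    have : f1 (f2 (x : V)) = x := by
      calc f1 (f2 (x : V)) = (f1 * f2) (x : V) := (Module.End.mul_apply _ _ _).symm
        _ = x := by rw [hcomp]; rfl
    simpa [LinearMap.restrict_apply] using this
  have hrA : rA * rA' = 1 := hres fA fA' hAE hA'E hA
  have hrB : rB * rB' = 1 := hres fB fB' hBE hB'E hB
  have hrel : rA * rB * rA' * rB' = μ • (1 : Module.End K E) := by
    ext x
    have h1 : ((rA * rB * rA' * rB') x : V) = (fA * fB * fA' * fB') (x : V) := by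
      simp [Module.End.mul_apply, LinearMap.restrict_apply, rA, rB, rA', rB']
    have h2 : (fA * fB * fA' * fB') (x : V) = μ • (x : V) := by
      rw [← hC]
      exact Module.End.mem_eigenspace_iff.mp x.2
    rw [h1, h2]
    simp
  have hdet : μ ^ (Module.finrank K E) = 1 := by
    have h1 : LinearMap.det (rA * rB * rA' * rB') = 1 := by
      rw [map_mul, map_mul, map_mul]
      have e1 : LinearMap.det rA * LinearMap.det rA' = 1 := by rw [← map_mul, hrA, map_one]
      have e2 : LinearMap.det rB * LinearMap.det rB' = 1 := by rw [← map_mul, hrB, map_one]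
      calc LinearMap.det rA * LinearMap.det rB * LinearMap.det rA' * LinearMap.det rB'
          = (LinearMap.det rA * LinearMap.det rA') * (LinearMap.det rB * LinearMap.det rB') := by
            ring
        _ = 1 := by rw [e1, e2, mul_one]
    have h2 : LinearMap.det (μ • (1 : Module.End K E)) = μ ^ (Module.finrank K E) := by
      rw [LinearMap.det_smul, map_one, mul_one]
    rw [hrel, h2] at h1
    exact h1
  have hdvd : p ∣ Module.finrank K E := hord ▸ orderOf_dvd_of_pow_eq_one hdet
  have hpos : 0 < Module.finrank K E := Module.finrank_pos
  have hle : Module.finrank K E ≤ Module.finrank K V := Submodule.finrank_le E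
  have : p ≤ n := le_trans (Nat.le_of_dvd hpos hdvd) (le_trans hle hdim)
  omega

end EndLemma

lemma gl_lemma {k : Type*} [Field k] [CharZero k] {n p : ℕ} (hp : p.Prime) (hn : n < p)
    (A B C : Matrix.GeneralLinearGroup (Fin n) k)
    (hC : C = A * B * A⁻¹ * B⁻¹) (hCA : C * A = A * C) (hCB : C * B = B * C)
    (hCp : C ^ p = 1) : C = 1 := by
  let K := AlgebraicClosure k
  let φ : k →+* K := algebraMap k K
  let ψ : Matrix (Fin n) (Fin n) K ≃ₐ[K] Module.End K (Fin n → K) := Matrix.toLinAlgEquiv'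
  let ρ : Matrix (Fin n) (Fin n) k →+* Module.End K (Fin n → K) :=
    (ψ.toRingEquiv.toRingHom).comp (RingHom.mapMatrix φ)
  have hρinj : Function.Injective ρ := by
    intro M N h
    have h2 : M.map φ = N.map φ := ψ.toRingEquiv.injective h
    ext i j
    have h3 := congrArg (fun X : Matrix (Fin n) (Fin n) K => X i j) h2
    simp only [Matrix.map_apply] at h3
    exact φ.injective h3
  have hdim : Module.finrank K (Fin n → K) ≤ n := le_of_eq (Module.finrank_fin_fun K)
  have key := end_lemma hp hn hdim (ρ A.val) (ρ (A⁻¹).val) (ρ B.val) (ρ (B⁻¹).val) (ρ C.val)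
    (by rw [← map_mul, A.mul_inv, map_one])
    (by rw [← map_mul, A.inv_mul, map_one])
    (by rw [← map_mul, B.mul_inv, map_one])
    (by rw [← map_mul, B.inv_mul, map_one])
    (by rw [← map_mul, ← map_mul, ← map_mul]
        exact congrArg ρ (congrArg Units.val hC))
    (by rw [← map_mul, ← map_mul]; exact congrArg ρ (congrArg Units.val hCA))
    (by rw [← map_mul, ← map_mul]; exact congrArg ρ (congrArg Units.val hCB))
    (by rw [← map_pow]
        have : (C.val) ^ p = ((C ^ p : _) : Matrix (Fin n) (Fin n) k) := by
          rw [Units.val_pow_eq_pow_val]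
        rw [this, hCp, Units.val_one, map_one])
  have : C.val = (1 : Matrix (Fin n) (Fin n) k) := by
    apply hρinj
    rw [key, map_one]
  exact Units.ext this


/-- (Cerveau–Déserti.) The Cremona group cannot be embedded into a linear group over a
field of characteristic zero. -/
theorem cremona_not_linear (k : Type*) [Field k] [CharZero k] (n : ℕ) (hn : 1 ≤ n) :
    ¬ ∃ h : Cremona →* Matrix.GeneralLinearGroup (Fin n) k, Function.Injective h := by
  rintro ⟨h, hinj⟩
  obtain ⟨p, hpn, hp⟩ := Nat.exists_infinite_primes (n + 1)
  set ζ : ℂ := Complex.exp (2 * Real.pi * Complex.I / p) with hζdef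
  have hζ : IsPrimitiveRoot ζ p := Complex.isPrimitiveRoot_exp p hp.ne_zero
  have hζ0 : ζ ≠ 0 := hζ.ne_zero hp.ne_zero
  have hζ0' : ζ⁻¹ ≠ 0 := inv_ne_zero hζ0
  set a := aa with ha
  set b := bb ζ hζ0 with hb
  set c := ccc ζ⁻¹ hζ0' with hcdef
  have rel1 : a * b = c * (b * a) := rel_comm ζ hζ0
  have rel2 : c * a = a * c := rel_ca ζ⁻¹ hζ0'
  have rel3 : c * b = b * c := rel_cb ζ⁻¹ ζ hζ0' hζ0
  have hcp : c ^ p = 1 := by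
    apply ccc_pow_eq_one
    rw [inv_pow, hζ.pow_eq_one, inv_one]
  have hcne : c ≠ 1 := by
    apply ccc_ne_one
    simpa only [ne_eq, inv_eq_one] using hζ.ne_one hp.one_lt
  have hc : c = a * b * a⁻¹ * b⁻¹ := by
    have h1 : (a * b) * (b * a)⁻¹ = c := by rw [rel1]; group
    rw [← h1]; group
  have hC : h c = h a * h b * (h a)⁻¹ * (h b)⁻¹ := by
    rw [hc]
    simp only [map_mul, map_inv]
  have hCA : h c * h a = h a * h c := by rw [← map_mul, ← map_mul, rel2]
  have hCB : h c * h b = h b * h c := by rw [← map_mul, ← map_mul, rel3]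
  have hCp : h c ^ p = 1 := by rw [← map_pow, hcp, map_one]
  have hC1 : h c = 1 := gl_lemma hp (by omega) (h a) (h b) (h c) hC hCA hCB hCp
  exact hcne (hinj (show h c = h 1 by rw [hC1, map_one]))
end
end

section
/- (Birkhoff's lemma) Let k be a field of characteristic zero, n ≥ 1 an integer and p a prime number. Let A, B, C be elements of GL_n(k) such that the commutator [A,B] = ABA⁻¹B⁻¹ equals C, such that [A,C] = [B,C] = Id, and such that C ≠ Id and C^p = Id. Then p ≤ n. -/
/-!
Pass to an algebraic closure `K` of `k`. Since `C ^ p = 1`, `C ≠ 1` and `p` is invertible in `K`,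
`C` has an eigenvalue `μ ≠ 1` with `μ ^ p = 1`, so `μ` has order `p`. The matrices `A` and `B`
commute with `C`, hence preserve its `μ`-eigenspace `E`, on which `C` acts as `μ`. The determinant
of the restriction to `E` is a homomorphism from the centralizer of `C` to the abelian group `Kˣ`,
so it kills `C = ⁅A, B⁆`: `μ ^ dim E = det (C|E) = 1`. Thus `p ∣ dim E`, and `0 < dim E ≤ n`.
-/

open Polynomial Module

open scoped commutatorElement

theorem Module.End.exists_hasEigenvalue_ne_one_of_pow_eq_one {K M : Type*} [Field K]
    [IsAlgClosed K] [AddCommGroup M] [Module K M] [FiniteDimensional K M] {f : End K M} {m : ℕ}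
    (hm : (m : K) ≠ 0) (hf : f ^ m = 1) (hf1 : f ≠ 1) :
    ∃ μ, f.HasEigenvalue μ ∧ μ ≠ 1 ∧ μ ^ m = 1 := by
  -- `q * (X - 1) = X ^ m - 1` and `q(1) = m ≠ 0`, so a root of `q` is an `m`-th root of unity `≠ 1`.
  let q : K[X] := ∑ i ∈ Finset.range m, X ^ i
  have hq : aeval f q * (f - 1) = 0 := by simp [q, geom_sum_mul, hf]
  have hq0 : (0 : K) ∈ spectrum K (aeval f q) :=
    (spectrum.zero_mem_iff K).mpr fun hu => hf1 (sub_eq_zero.mp (hu.mul_right_eq_zero.mp hq))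
  have : Nontrivial M := by
    contrapose! hf1
    exact Subsingleton.elim _ _
  obtain ⟨ν, hν⟩ := f.exists_eigenvalue
  rw [spectrum.map_polynomial_aeval_of_nonempty f q ⟨ν, hν.mem_spectrum⟩] at hq0
  obtain ⟨μ, hμ, hqμ : eval μ q = 0⟩ := hq0
  have hqμ' : eval μ q * (μ - 1) = μ ^ m - 1 := by simp [q, eval_finsetSum, geom_sum_mul]
  refine ⟨μ, hasEigenvalue_iff_mem_spectrum.mpr hμ, ?_, ?_⟩
  · rintro rfl
    exact hm (by simpa [q, eval_finsetSum] using hqμ)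
  · rwa [hqμ, zero_mul, eq_comm, sub_eq_zero] at hqμ'

namespace LinearMap.GeneralLinearGroup

variable {K M : Type*} [Field K] [AddCommGroup M] [Module K M]

def restrictEigenspace (c : GeneralLinearGroup K M) (μ : K) :
    Subgroup.centralizer {c} →* End K (End.eigenspace (c : End K M) μ) where
  toFun u := ((u : GeneralLinearGroup K M) : End K M).restrict <|
    End.mapsTo_genEigenspace_of_comm
      (Commute.units_val (Subgroup.mem_centralizer_singleton_iff.mp u.2).symm) μ 1
  map_one' := rfl
  map_mul' _ _ := rfl

theorem restrictEigenspace_self (c : GeneralLinearGroup K M) (μ : K) :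
    restrictEigenspace c μ ⟨c, Subgroup.mem_centralizer_singleton_iff.mpr rfl⟩ = μ • 1 := by
  ext x
  exact End.mem_eigenspace_iff.mp x.2

theorem pow_finrank_eigenspace_eq_one [FiniteDimensional K M] {a b c : GeneralLinearGroup K M}
    (habc : ⁅a, b⁆ = c) (hac : Commute a c) (hbc : Commute b c) (μ : K) :
    μ ^ finrank K (End.eigenspace (c : End K M) μ) = 1 := by
  let δ := (LinearMap.det.comp (restrictEigenspace c μ)).toHomUnits
  let a' : Subgroup.centralizer {c} := ⟨a, Subgroup.mem_centralizer_singleton_iff.mpr hac.eq⟩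
  let b' : Subgroup.centralizer {c} := ⟨b, Subgroup.mem_centralizer_singleton_iff.mpr hbc.eq⟩
  let c' : Subgroup.centralizer {c} := ⟨c, Subgroup.mem_centralizer_singleton_iff.mpr rfl⟩
  have hδ : δ c' = 1 := by
    rw [show c' = ⁅a', b'⁆ from Subtype.ext habc.symm, map_commutatorElement,
      commutatorElement_eq_one_iff_commute]
    exact Commute.all _ _
  simpa [δ, c', restrictEigenspace_self, LinearMap.det_smul] using congrArg Units.val hδ

theorem le_finrank_of_commutator_pow_eq_one [IsAlgClosed K] [FiniteDimensional K M] {p : ℕ}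
    (hp : p.Prime) (hpK : (p : K) ≠ 0) {a b c : GeneralLinearGroup K M} (habc : ⁅a, b⁆ = c)
    (hac : Commute a c) (hbc : Commute b c) (hc : c ≠ 1) (hcp : c ^ p = 1) :
    p ≤ finrank K M := by
  have : Fact p.Prime := ⟨hp⟩
  obtain ⟨μ, hμ, hμ1, hμp⟩ := End.exists_hasEigenvalue_ne_one_of_pow_eq_one hpK
    (by rw [← Units.val_pow_eq_pow_val, hcp, Units.val_one]) (fun h => hc (Units.ext h))
  set E := End.eigenspace (c : End K M) μ
  have hdvd : p ∣ finrank K E := orderOf_eq_prime hμp hμ1 ▸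
    orderOf_dvd_of_pow_eq_one (pow_finrank_eigenspace_eq_one habc hac hbc μ)
  have : Nontrivial E := Submodule.nontrivial_iff_ne_bot.mpr hμ
  calc p ≤ finrank K E := Nat.le_of_dvd finrank_pos hdvd
    _ ≤ finrank K M := Submodule.finrank_le E

end LinearMap.GeneralLinearGroup

theorem birkhoff_lemma_general {k : Type*} [Field k] [CharZero k] {n : ℕ} {p : ℕ}
    (hp : p.Prime) (A B C : Matrix.GeneralLinearGroup (Fin n) k)
    (hABC : ⁅A, B⁆ = C) (hAC : ⁅A, C⁆ = 1) (hBC : ⁅B, C⁆ = 1)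
    (hC : C ≠ 1) (hCp : C ^ p = 1) :
    p ≤ n := by
  let K := AlgebraicClosure k
  let φ : Matrix.GeneralLinearGroup (Fin n) k →* LinearMap.GeneralLinearGroup K (Fin n → K) :=
    Matrix.GeneralLinearGroup.toLin.toMonoidHom.comp
      (Matrix.GeneralLinearGroup.map (algebraMap k K))
  have hφ : Function.Injective φ := Matrix.GeneralLinearGroup.toLin.injective.comp <|
    Units.map_injective <| Matrix.map_injective (algebraMap k K).injective
  simpa using LinearMap.GeneralLinearGroup.le_finrank_of_commutator_pow_eq_one hp
    (Nat.cast_ne_zero.mpr hp.ne_zero) (by rw [← map_commutatorElement, hABC])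
    ((commutatorElement_eq_one_iff_commute.mp hAC).map φ)
    ((commutatorElement_eq_one_iff_commute.mp hBC).map φ)
    ((map_ne_one_iff φ hφ).mpr hC) (by rw [← map_pow, hCp, map_one])

/-- (Birkhoff's lemma.) Let `k` be a field of characteristic zero and let `A`, `B`, `C` be
invertible `n × n` matrices over `k` with `[A,B] = C`, `[A,C] = [B,C] = 1`, `C ≠ 1` and
`C^p = 1` for a prime `p`.  Then `p ≤ n`. -/
theorem birkhoff_lemma {k : Type*} [Field k] [CharZero k] {n : ℕ} (hn : 1 ≤ n) {p : ℕ}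
    (hp : p.Prime) (A B C : Matrix.GeneralLinearGroup (Fin n) k)
    (hABC : ⁅A, B⁆ = C) (hAC : ⁅A, C⁆ = 1) (hBC : ⁅B, C⁆ = 1)
    (hC : C ≠ 1) (hCp : C ^ p = 1) :
    p ≤ n :=
  birkhoff_lemma_general hp A B C hABC hAC hBC hC hCp
end

section
/- (Automorphisms of the affine group of the complex line) Let Aff(ℂ) = { z ↦ az + b : a ∈ ℂ*, b ∈ ℂ }, viewed as a subgroup of the permutation group of ℂ. For every group automorphism φ of Aff(ℂ) there exist a ring automorphism τ of the field ℂ and an element ψ ∈ Aff(ℂ) such that φ(f) = (τ ∘ ψ) ∘ f ∘ (τ ∘ ψ)⁻¹ for every f ∈ Aff(ℂ) (equality of bijections of ℂ). (Note that for g ∈ Aff(ℂ), the map τ ∘ g ∘ τ⁻¹ is again in Aff(ℂ): it is g with its coefficients twisted by τ.) -/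
noncomputable section

/-- The affine group of the complex line: the group (under composition) of bijections of
ℂ of the form `z ↦ a z + b` with `a ≠ 0`, as a subgroup of the permutation group of ℂ. -/
def AffC : Subgroup (Equiv.Perm ℂ) where
  carrier := { f : Equiv.Perm ℂ | ∃ a b : ℂ, a ≠ 0 ∧ ∀ z : ℂ, f z = a * z + b }
  one_mem' := ⟨1, 0, one_ne_zero, fun z => by simp⟩
  mul_mem' := by
    rintro f g ⟨a, b, ha, hf⟩ ⟨a', b', ha', hg⟩
    refine ⟨a * a', a * b' + b, mul_ne_zero ha ha', fun z => ?_⟩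
    have e : (f * g) z = f (g z) := rfl
    rw [e, hg z, hf]
    ring
  inv_mem' := by
    rintro f ⟨a, b, ha, hf⟩
    refine ⟨a⁻¹, -(a⁻¹ * b), inv_ne_zero ha, fun z => ?_⟩
    have e : (f⁻¹ : Equiv.Perm ℂ) z = f.symm z := rfl
    rw [e, Equiv.symm_apply_eq, hf]
    field_simp
    ring

/-!
Every translation is a commutator, `t_b = ⁅s_2, t_b⁆`, and commutators have linear coefficient
`1`; hence `φ` maps translations to translations, `φ (t_b) = t_{σ b}` with `σ` additive and
bijective. Conjugating `t_b` by the dilation `s_a` gives `t_{a b}`, so `σ (a b) = λ(a) σ(b)`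
where `λ(a)` is the linear coefficient of `φ (s_a)`; thus `τ := σ / σ 1` is a field
automorphism and `λ = τ`. The images `φ (s_a)` commute, so they share a fixed point `c`, and
conjugation by `z ↦ τ⁻¹(σ 1) z + τ⁻¹(c)` absorbs the two constants `σ 1` and `c`.
-/

open Equiv
open scoped commutatorElement

def AddEquiv.toRingEquivDivMapOne {K : Type*} [Field K] (σ : K ≃+ K)
    (h : ∀ a b, σ (a * b) * σ 1 = σ a * σ b) : K ≃+* K where
  toFun x := σ x / σ 1
  invFun y := σ.symm (y * σ 1)
  left_inv x := by
    dsimp only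
    rw [div_mul_cancel₀ _ (σ.map_ne_zero_iff.mpr one_ne_zero), AddEquiv.symm_apply_apply]
  right_inv y := by
    dsimp only
    rw [AddEquiv.apply_symm_apply, mul_div_cancel_right₀ _ (σ.map_ne_zero_iff.mpr one_ne_zero)]
  map_mul' a b := by
    rw [div_mul_div_comm, ← h, mul_div_mul_right _ _ (σ.map_ne_zero_iff.mpr one_ne_zero)]
  map_add' a b := by
    rw [map_add, add_div]

theorem AddEquiv.toRingEquivDivMapOne_apply {K : Type*} [Field K] (σ : K ≃+ K)
    (h : ∀ a b, σ (a * b) * σ 1 = σ a * σ b) (x : K) :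
    σ.toRingEquivDivMapOne h x = σ x / σ 1 := rfl

def affineGroup (K : Type*) [Field K] : Subgroup (Perm K) where
  carrier := { f : Perm K | ∃ a b : K, a ≠ 0 ∧ ∀ z : K, f z = a * z + b }
  one_mem' := ⟨1, 0, one_ne_zero, fun z => by simp⟩
  mul_mem' := by
    rintro f g ⟨a, b, ha, hf⟩ ⟨a', b', ha', hg⟩
    exact ⟨a * a', a * b' + b, mul_ne_zero ha ha', fun z => by
      rw [Perm.mul_apply, hg, hf]; ring⟩
  inv_mem' := by
    rintro f ⟨a, b, ha, hf⟩
    refine ⟨a⁻¹, -(a⁻¹ * b), inv_ne_zero ha, fun z => ?_⟩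
    rw [Perm.inv_def, Equiv.symm_apply_eq, hf]
    field_simp
    ring

namespace affineGroup

variable {K : Type*} [Field K]

def linCoeff (f : affineGroup K) : K := (f : Perm K) 1 - (f : Perm K) 0

def transCoeff (f : affineGroup K) : K := (f : Perm K) 0

theorem apply_eq (f : affineGroup K) (z : K) :
    (f : Perm K) z = linCoeff f * z + transCoeff f := by
  obtain ⟨a, b, -, hf⟩ := f.2
  simp only [linCoeff, transCoeff, hf]
  ring

theorem linCoeff_ne_zero (f : affineGroup K) : linCoeff f ≠ 0 := by
  obtain ⟨a, b, ha, hf⟩ := f.2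
  simpa [linCoeff, hf] using ha

theorem ext_coeff {f g : affineGroup K} (hA : linCoeff f = linCoeff g)
    (hB : transCoeff f = transCoeff g) : f = g :=
  Subtype.ext <| Equiv.ext fun z => by rw [apply_eq, apply_eq, hA, hB]

theorem linCoeff_mul (f g : affineGroup K) : linCoeff (f * g) = linCoeff f * linCoeff g := by
  rw [linCoeff, Subgroup.coe_mul, Perm.mul_apply, Perm.mul_apply, apply_eq g 1, apply_eq g 0,
    apply_eq f, apply_eq f]
  ring

theorem transCoeff_mul (f g : affineGroup K) :
    transCoeff (f * g) = linCoeff f * transCoeff g + transCoeff f := by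
  rw [transCoeff, Subgroup.coe_mul, Perm.mul_apply, apply_eq f]
  rfl

@[simp] theorem linCoeff_one : linCoeff (1 : affineGroup K) = 1 :=
  sub_zero 1

@[simp] theorem transCoeff_one : transCoeff (1 : affineGroup K) = 0 := rfl

theorem linCoeff_inv (f : affineGroup K) : linCoeff f⁻¹ = (linCoeff f)⁻¹ := by
  have h : linCoeff f * linCoeff f⁻¹ = 1 := by
    rw [← linCoeff_mul, mul_inv_cancel, linCoeff_one]
  exact eq_inv_of_mul_eq_one_right h

theorem transCoeff_inv (f : affineGroup K) : transCoeff f⁻¹ = -transCoeff f / linCoeff f := by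
  have h : linCoeff f * transCoeff f⁻¹ + transCoeff f = 0 := by
    rw [← transCoeff_mul, mul_inv_cancel, transCoeff_one]
  rw [eq_div_iff (linCoeff_ne_zero f)]
  linear_combination h

theorem linCoeff_conj (g f : affineGroup K) : linCoeff (g * f * g⁻¹) = linCoeff f := by
  rw [linCoeff_mul, linCoeff_mul, linCoeff_inv]
  field_simp [linCoeff_ne_zero g]

theorem transCoeff_conj (g f : affineGroup K) :
    transCoeff (g * f * g⁻¹) = linCoeff g * transCoeff f + (1 - linCoeff f) * transCoeff g := by
  rw [transCoeff_mul, transCoeff_mul, linCoeff_mul, transCoeff_inv]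
  field_simp [linCoeff_ne_zero g]
  ring

theorem linCoeff_commutatorElement (f g : affineGroup K) : linCoeff ⁅f, g⁆ = 1 := by
  rw [commutatorElement_def, linCoeff_mul, linCoeff_conj, linCoeff_inv,
    mul_inv_cancel₀ (linCoeff_ne_zero g)]

theorem one_sub_linCoeff_mul_transCoeff_of_commute {f g : affineGroup K} (h : Commute f g) :
    (1 - linCoeff g) * transCoeff f = (1 - linCoeff f) * transCoeff g := by
  have hB := congrArg transCoeff h.eq
  rw [transCoeff_mul, transCoeff_mul] at hB
  linear_combination hB

def ofCoeff (a b : K) (ha : a ≠ 0) : affineGroup K :=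
  ⟨{ toFun := fun z => a * z + b
     invFun := fun z => (z - b) / a
     left_inv := fun z => by field_simp; ring
     right_inv := fun z => by field_simp; ring },
   ⟨a, b, ha, fun _ => rfl⟩⟩

@[simp] theorem linCoeff_ofCoeff (a b : K) (ha : a ≠ 0) : linCoeff (ofCoeff a b ha) = a := by
  simp [linCoeff, ofCoeff]

@[simp] theorem transCoeff_ofCoeff (a b : K) (ha : a ≠ 0) : transCoeff (ofCoeff a b ha) = b := by
  simp [transCoeff, ofCoeff]

def translation (b : K) : affineGroup K := ofCoeff 1 b one_ne_zero

def dilation (a : K) (ha : a ≠ 0) : affineGroup K := ofCoeff a 0 ha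

@[simp] theorem linCoeff_translation (b : K) : linCoeff (translation b) = 1 := linCoeff_ofCoeff ..

@[simp] theorem transCoeff_translation (b : K) : transCoeff (translation b) = b :=
  transCoeff_ofCoeff ..

@[simp] theorem linCoeff_dilation (a : K) (ha : a ≠ 0) : linCoeff (dilation a ha) = a :=
  linCoeff_ofCoeff ..

@[simp] theorem transCoeff_dilation (a : K) (ha : a ≠ 0) : transCoeff (dilation a ha) = 0 :=
  transCoeff_ofCoeff ..

theorem eq_translation_of_linCoeff_eq_one {f : affineGroup K} (h : linCoeff f = 1) :
    f = translation (transCoeff f) :=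
  ext_coeff (by simp [h]) (by simp)

theorem translation_mul (b c : K) : translation b * translation c = translation (b + c) :=
  ext_coeff (by simp [linCoeff_mul]) (by simp [transCoeff_mul, add_comm])

theorem translation_inv (b : K) : (translation b)⁻¹ = translation (-b) :=
  ext_coeff (by simp [linCoeff_inv]) (by simp [transCoeff_inv])

theorem translation_mul_dilation (f : affineGroup K) :
    translation (transCoeff f) * dilation (linCoeff f) (linCoeff_ne_zero f) = f :=
  ext_coeff (by simp [linCoeff_mul]) (by simp [transCoeff_mul])

theorem dilation_mul_translation_mul_inv (a : K) (ha : a ≠ 0) (b : K) :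
    dilation a ha * translation b * (dilation a ha)⁻¹ = translation (a * b) :=
  ext_coeff (by simp [linCoeff_conj]) (by simp [transCoeff_conj])

theorem commute_dilation (a a' : K) (ha : a ≠ 0) (ha' : a' ≠ 0) :
    Commute (dilation a ha) (dilation a' ha') :=
  ext_coeff (by simp [linCoeff_mul, mul_comm]) (by simp [transCoeff_mul])

theorem translation_eq_commutatorElement [NeZero (2 : K)] (b : K) :
    translation b = ⁅dilation (2 : K) two_ne_zero, translation b⁆ := by
  rw [commutatorElement_def, dilation_mul_translation_mul_inv, translation_inv, translation_mul]
  congr 1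
  ring

theorem ringEquiv_apply_symm (τ : K ≃+* K) (g : affineGroup K) (z : K) :
    τ ((g : Perm K) (τ.symm z)) = τ (linCoeff g) * z + τ (transCoeff g) := by
  rw [apply_eq, map_add, map_mul, RingEquiv.apply_symm_apply]

section Automorphism

variable [NeZero (2 : K)] (φ : affineGroup K ≃* affineGroup K)

theorem linCoeff_map_translation (b : K) : linCoeff (φ (translation b)) = 1 := by
  rw [translation_eq_commutatorElement, map_commutatorElement, linCoeff_commutatorElement]

def translationEquiv : K ≃+ K where
  toFun b := transCoeff (φ (translation b))
  invFun b := transCoeff (φ.symm (translation b))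
  left_inv b := by
    dsimp only
    rw [← eq_translation_of_linCoeff_eq_one (linCoeff_map_translation φ b),
      MulEquiv.symm_apply_apply, transCoeff_translation]
  right_inv b := by
    dsimp only
    rw [← eq_translation_of_linCoeff_eq_one (linCoeff_map_translation φ.symm b),
      MulEquiv.apply_symm_apply, transCoeff_translation]
  map_add' b c := by
    rw [← translation_mul, map_mul, transCoeff_mul, linCoeff_map_translation, one_mul, add_comm]

theorem map_translation (b : K) : φ (translation b) = translation (translationEquiv φ b) :=
  eq_translation_of_linCoeff_eq_one (linCoeff_map_translation φ b)

theorem translationEquiv_mul (a : K) (ha : a ≠ 0) (b : K) :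
    translationEquiv φ (a * b) = linCoeff (φ (dilation a ha)) * translationEquiv φ b := by
  have h := congrArg (transCoeff ∘ φ) (dilation_mul_translation_mul_inv a ha b)
  simp only [Function.comp_apply, map_mul, map_inv, map_translation, transCoeff_conj,
    transCoeff_translation, linCoeff_translation, sub_self, zero_mul, add_zero] at h
  exact h.symm

theorem translationEquiv_eq_linCoeff_map_dilation_mul (a : K) (ha : a ≠ 0) :
    translationEquiv φ a = linCoeff (φ (dilation a ha)) * translationEquiv φ 1 := by
  rw [← translationEquiv_mul, mul_one]

theorem translationEquiv_mul_mul_one (a b : K) :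
    translationEquiv φ (a * b) * translationEquiv φ 1 =
      translationEquiv φ a * translationEquiv φ b := by
  rcases eq_or_ne a 0 with rfl | ha
  · simp
  · rw [translationEquiv_mul φ a ha, translationEquiv_eq_linCoeff_map_dilation_mul φ a ha]
    ring

def fieldAut : K ≃+* K :=
  (translationEquiv φ).toRingEquivDivMapOne (translationEquiv_mul_mul_one φ)

theorem translationEquiv_one_ne_zero : translationEquiv φ 1 ≠ 0 :=
  (translationEquiv φ).map_ne_zero_iff.mpr one_ne_zero

theorem translationEquiv_eq_mul_fieldAut (b : K) :
    translationEquiv φ b = translationEquiv φ 1 * fieldAut φ b := by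
  rw [fieldAut, AddEquiv.toRingEquivDivMapOne_apply,
    mul_div_cancel₀ _ (translationEquiv_one_ne_zero φ)]

theorem linCoeff_map_dilation (a : K) (ha : a ≠ 0) :
    linCoeff (φ (dilation a ha)) = fieldAut φ a := by
  rw [fieldAut, AddEquiv.toRingEquivDivMapOne_apply,
    translationEquiv_eq_linCoeff_map_dilation_mul φ a ha,
    mul_div_cancel_right₀ _ (translationEquiv_one_ne_zero φ)]

theorem linCoeff_map (f : affineGroup K) : linCoeff (φ f) = fieldAut φ (linCoeff f) := by
  rw [← translation_mul_dilation f, map_mul, linCoeff_mul, linCoeff_map_translation, one_mul,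
    linCoeff_map_dilation, linCoeff_mul, linCoeff_translation, linCoeff_dilation, one_mul]

/-- `c` is the common fixed point of the commuting maps `φ (dilation a ha)`. -/
theorem exists_transCoeff_map_dilation :
    ∃ c, ∀ a (ha : a ≠ 0), transCoeff (φ (dilation a ha)) = (1 - fieldAut φ a) * c := by
  refine ⟨-transCoeff (φ (dilation 2 two_ne_zero)), fun a ha => ?_⟩
  have h := one_sub_linCoeff_mul_transCoeff_of_commute
    ((commute_dilation a 2 ha two_ne_zero).map φ)
  rw [linCoeff_map_dilation, linCoeff_map_dilation, map_ofNat] at h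
  linear_combination -h

theorem exists_transCoeff_map : ∃ c, ∀ f, transCoeff (φ f) =
    translationEquiv φ 1 * fieldAut φ (transCoeff f) + (1 - fieldAut φ (linCoeff f)) * c := by
  obtain ⟨c, hc⟩ := exists_transCoeff_map_dilation φ
  refine ⟨c, fun f => ?_⟩
  conv_lhs => rw [← translation_mul_dilation f]
  rw [map_mul, map_translation, transCoeff_mul, hc, linCoeff_translation, transCoeff_translation,
    translationEquiv_eq_mul_fieldAut, one_mul, add_comm]

theorem exists_ringEquiv_conj :
    ∃ (τ : K ≃+* K) (ψ : affineGroup K), ∀ f : affineGroup K, ∀ z : K,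
      (φ f : Perm K) z = τ (((ψ * f * ψ⁻¹ : affineGroup K) : Perm K) (τ.symm z)) := by
  set τ := fieldAut φ
  obtain ⟨c, hc⟩ := exists_transCoeff_map φ
  have hp : τ.symm (translationEquiv φ 1) ≠ 0 :=
    (map_ne_zero _).mpr (translationEquiv_one_ne_zero φ)
  refine ⟨τ, ofCoeff _ (τ.symm c) hp, fun f z => ?_⟩
  rw [apply_eq, ringEquiv_apply_symm, linCoeff_conj, transCoeff_conj, linCoeff_map, hc]
  simp only [linCoeff_ofCoeff, transCoeff_ofCoeff, map_add, map_mul, map_sub, map_one,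
    RingEquiv.apply_symm_apply]
  ring

end Automorphism

end affineGroup

/-- (Automorphisms of the affine group of the complex line.)  Every group automorphism
`φ` of `Aff(ℂ)` is the composition of an inner automorphism and the action of a field
automorphism `τ` of ℂ: `φ(f) = (τ ∘ ψ) ∘ f ∘ (τ ∘ ψ)⁻¹` for all `f ∈ Aff(ℂ)`. -/
theorem affC_automorphisms (φ : ↥AffC ≃* ↥AffC) :
    ∃ (τ : ℂ ≃+* ℂ) (ψ : ↥AffC), ∀ f : ↥AffC, ∀ z : ℂ,
      ((φ f : ↥AffC) : Equiv.Perm ℂ) z =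
        τ (((ψ * f * ψ⁻¹ : ↥AffC) : Equiv.Perm ℂ) (τ.symm z)) :=
  -- `AffC` is `affineGroup ℂ` by definition.
  affineGroup.exists_ringEquiv_conj φ
end
end

section
/- The set E⁽²⁾ = { (x,y) ↦ (x + P(y), y) : P ∈ ℂ[y] } is a maximal abelian subgroup of E: E⁽²⁾ is an abelian subgroup of E, and every abelian subgroup K of E containing E⁽²⁾ is equal to E⁽²⁾. -/
noncomputable section

open MvPolynomial

/-- A self-map of ℂ² is polynomial if both components are given by polynomials in the
two coordinates. -/
def IsPolyMap (f : ℂ × ℂ → ℂ × ℂ) : Prop :=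
  ∃ p q : MvPolynomial (Fin 2) ℂ, ∀ v : ℂ × ℂ,
    f v = (MvPolynomial.eval ![v.1, v.2] p, MvPolynomial.eval ![v.1, v.2] q)

theorem IsPolyMap.comp {f g : ℂ × ℂ → ℂ × ℂ} (hf : IsPolyMap f) (hg : IsPolyMap g) :
    IsPolyMap (f ∘ g) := by
  obtain ⟨p, q, hpq⟩ := hf
  obtain ⟨p', q', hpq'⟩ := hg
  refine ⟨bind₁ ![p', q'] p, bind₁ ![p', q'] q, fun v => ?_⟩
  have key : ∀ r : MvPolynomial (Fin 2) ℂ,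
      MvPolynomial.eval ![v.1, v.2] (bind₁ ![p', q'] r) =
        MvPolynomial.eval
          ![MvPolynomial.eval ![v.1, v.2] p', MvPolynomial.eval ![v.1, v.2] q'] r := by
    intro r
    have h := MvPolynomial.aeval_bind₁ (S := ℂ) ![v.1, v.2] ![p', q'] r
    have h2 : (fun i => MvPolynomial.aeval ![v.1, v.2] (![p', q'] i)) =
        ![MvPolynomial.eval ![v.1, v.2] p', MvPolynomial.eval ![v.1, v.2] q'] := by
      funext i
      fin_cases i <;> rfl
    rw [h2] at h
    exact h
  calc (f ∘ g) v
      = f (MvPolynomial.eval ![v.1, v.2] p', MvPolynomial.eval ![v.1, v.2] q') := by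
        rw [Function.comp_apply, hpq' v]
    _ = (MvPolynomial.eval ![MvPolynomial.eval ![v.1, v.2] p',
          MvPolynomial.eval ![v.1, v.2] q'] p,
         MvPolynomial.eval ![MvPolynomial.eval ![v.1, v.2] p',
          MvPolynomial.eval ![v.1, v.2] q'] q) := hpq _
    _ = _ := by rw [key p, key q]

/-- The group Aut(ℂ²) of polynomial automorphisms of ℂ², as a subgroup of the
permutation group of ℂ²: the bijections of ℂ² which are polynomial and whose inverse is
polynomial. -/
def AutC2 : Subgroup (Equiv.Perm (ℂ × ℂ)) where
  carrier := { f : Equiv.Perm (ℂ × ℂ) | IsPolyMap f ∧ IsPolyMap f.symm }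
  one_mem' := by
    constructor <;>
      exact ⟨MvPolynomial.X 0, MvPolynomial.X 1, fun v => by simp <;> rfl⟩
  mul_mem' := by
    rintro f g ⟨hf1, hf2⟩ ⟨hg1, hg2⟩
    constructor
    · have h := hf1.comp hg1
      have e : ⇑(f * g) = ⇑f ∘ ⇑g := rfl
      rwa [e]
    · have h := hg2.comp hf2
      have e : ⇑(f * g).symm = ⇑g.symm ∘ ⇑f.symm := rfl
      rwa [e]
  inv_mem' := by
    rintro f ⟨h1, h2⟩
    exact ⟨h2, h1⟩

/-- The elementary subgroup E of Aut(ℂ²): maps (x,y) ↦ (αx + P(y), βy + γ). -/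
def ElemGrp : Subgroup ↥AutC2 where
  carrier := { f | ∃ (α β γ : ℂ) (P : Polynomial ℂ), α ≠ 0 ∧ β ≠ 0 ∧
    ∀ v : ℂ × ℂ, (f : Equiv.Perm (ℂ × ℂ)) v = (α * v.1 + P.eval v.2, β * v.2 + γ) }
  one_mem' := ⟨1, 1, 0, 0, one_ne_zero, one_ne_zero, fun v => by simp⟩
  mul_mem' := by
    rintro f g ⟨α, β, γ, P, hα, hβ, hf⟩ ⟨α', β', γ', P', hα', hβ', hg⟩
    refine ⟨α * α', β * β', β * γ' + γ,
      Polynomial.C α * P' + P.comp (Polynomial.C β' * Polynomial.X + Polynomial.C γ'),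
      mul_ne_zero hα hα', mul_ne_zero hβ hβ', fun v => ?_⟩
    have e : ((f * g : ↥AutC2) : Equiv.Perm (ℂ × ℂ)) v
        = (f : Equiv.Perm (ℂ × ℂ)) ((g : Equiv.Perm (ℂ × ℂ)) v) := rfl
    rw [e, hg v, hf]
    simp only [Polynomial.eval_add, Polynomial.eval_mul, Polynomial.eval_comp,
      Polynomial.eval_C, Polynomial.eval_X, Prod.mk.injEq]
    constructor <;> ring
  inv_mem' := by
    rintro f ⟨α, β, γ, P, hα, hβ, hf⟩
    refine ⟨α⁻¹, β⁻¹, -(β⁻¹ * γ),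
      Polynomial.C (-α⁻¹) * P.comp (Polynomial.C β⁻¹ * Polynomial.X + Polynomial.C (-(β⁻¹ * γ))),
      inv_ne_zero hα, inv_ne_zero hβ, fun v => ?_⟩
    have e : ((f⁻¹ : ↥AutC2) : Equiv.Perm (ℂ × ℂ)) v
        = ((f : Equiv.Perm (ℂ × ℂ))).symm v := rfl
    rw [e, Equiv.symm_apply_eq, hf, Prod.ext_iff]
    simp only [Polynomial.eval_add, Polynomial.eval_mul, Polynomial.eval_comp,
      Polynomial.eval_C, Polynomial.eval_X]
    constructor
    · field_simp; ring
    · field_simp; ring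

/-- The subgroup E⁽²⁾ of Aut(ℂ²): maps (x,y) ↦ (x + P(y), y). -/
def E2Grp : Subgroup ↥AutC2 where
  carrier := { f | ∃ P : Polynomial ℂ, ∀ v : ℂ × ℂ,
    (f : Equiv.Perm (ℂ × ℂ)) v = (v.1 + P.eval v.2, v.2) }
  one_mem' := ⟨0, fun v => by simp⟩
  mul_mem' := by
    rintro f g ⟨P, hf⟩ ⟨P', hg⟩
    refine ⟨P' + P, fun v => ?_⟩
    have e : ((f * g : ↥AutC2) : Equiv.Perm (ℂ × ℂ)) v
        = (f : Equiv.Perm (ℂ × ℂ)) ((g : Equiv.Perm (ℂ × ℂ)) v) := rfl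
    rw [e, hg v, hf]
    simp only [Polynomial.eval_add, Prod.mk.injEq]
    constructor <;> first | ring | trivial
  inv_mem' := by
    rintro f ⟨P, hf⟩
    refine ⟨-P, fun v => ?_⟩
    have e : ((f⁻¹ : ↥AutC2) : Equiv.Perm (ℂ × ℂ)) v
        = ((f : Equiv.Perm (ℂ × ℂ))).symm v := rfl
    rw [e, Equiv.symm_apply_eq, hf, Prod.ext_iff]
    simp

/-! An elementary map `f = (αx + P(y), βy + γ)` commutes with the translation
`(x + Q(y), y)` only if `α Q(y) = Q(βy + γ)` for all `y`. Taking `Q = 1` gives `α = 1`,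
and `Q = y` gives `βy + γ = y`, so `f = (x + P(y), y)` lies in `E⁽²⁾`. -/

theorem MvPolynomial.eval_aeval_X {R σ : Type*} [CommSemiring R] (x : σ → R) (i : σ)
    (Q : Polynomial R) : eval x (Polynomial.aeval (X i) Q) = Q.eval (x i) := by
  induction Q using Polynomial.induction_on' with
  | add p q hp hq => simp [hp, hq]
  | monomial n a => simp [Polynomial.aeval_monomial]

namespace AutC2

@[simp]
theorem coe_mul_apply (f g : ↥AutC2) (v : ℂ × ℂ) :
    ((f * g : ↥AutC2) : Equiv.Perm (ℂ × ℂ)) v =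
      (f : Equiv.Perm (ℂ × ℂ)) ((g : Equiv.Perm (ℂ × ℂ)) v) :=
  rfl

theorem ext {f g : ↥AutC2}
    (h : ∀ v, (f : Equiv.Perm (ℂ × ℂ)) v = (g : Equiv.Perm (ℂ × ℂ)) v) : f = g :=
  Subtype.ext (Equiv.ext h)

def translation (Q : Polynomial ℂ) : ↥AutC2 :=
  ⟨{ toFun := fun v => (v.1 + Q.eval v.2, v.2)
     invFun := fun v => (v.1 - Q.eval v.2, v.2)
     left_inv := fun v => by simp
     right_inv := fun v => by simp },
    ⟨⟨X 0 + Polynomial.aeval (X 1) Q, X 1, fun v => by simp [eval_aeval_X]⟩,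
     ⟨X 0 - Polynomial.aeval (X 1) Q, X 1, fun v => by simp [eval_aeval_X]⟩⟩⟩

@[simp]
theorem translation_apply (Q : Polynomial ℂ) (v : ℂ × ℂ) :
    ((translation Q : ↥AutC2) : Equiv.Perm (ℂ × ℂ)) v = (v.1 + Q.eval v.2, v.2) :=
  rfl

theorem mul_eval_eq_eval_of_commute_translation {f : ↥AutC2} {α β γ : ℂ} {P : Polynomial ℂ}
    (hf : ∀ v, (f : Equiv.Perm (ℂ × ℂ)) v = (α * v.1 + P.eval v.2, β * v.2 + γ))
    {Q : Polynomial ℂ} (hQ : translation Q * f = f * translation Q) (y : ℂ) :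
    α * Q.eval y = Q.eval (β * y + γ) := by
  have h := congrArg (fun g : ↥AutC2 => (g : Equiv.Perm (ℂ × ℂ)) (0, y)) hQ
  simp only [coe_mul_apply, hf, translation_apply, Prod.mk.injEq, and_true] at h
  linear_combination -h

end AutC2

open AutC2

theorem translation_mem_E2Grp (Q : Polynomial ℂ) : translation Q ∈ E2Grp :=
  ⟨Q, fun _ => rfl⟩

theorem E2Grp_le_ElemGrp : E2Grp ≤ ElemGrp := by
  rintro f ⟨P, hf⟩
  exact ⟨1, 1, 0, P, one_ne_zero, one_ne_zero, fun v => by simp [hf v]⟩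

theorem E2Grp_mul_comm : ∀ a ∈ E2Grp, ∀ b ∈ E2Grp, a * b = b * a := by
  rintro a ⟨P, ha⟩ b ⟨Q, hb⟩
  refine AutC2.ext fun v => ?_
  simp only [coe_mul_apply, ha, hb, Prod.mk.injEq, and_true]
  ring

theorem mem_E2Grp_of_mem_ElemGrp_of_commute {f : ↥AutC2} (hf : f ∈ ElemGrp)
    (hcomm : ∀ g ∈ E2Grp, g * f = f * g) : f ∈ E2Grp := by
  obtain ⟨α, β, γ, P, -, -, hfe⟩ := hf
  have key (Q : Polynomial ℂ) :=
    mul_eval_eq_eval_of_commute_translation hfe (hcomm _ (translation_mem_E2Grp Q))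
  have hα : α = 1 := by simpa using key 1 0
  have hγ : γ = 0 := by simpa using (key Polynomial.X 0).symm
  have hβ : β = 1 := by simpa [hα, hγ] using (key Polynomial.X 1).symm
  exact ⟨P, fun v => by simp [hfe v, hα, hβ, hγ]⟩

/-- The group `E⁽²⁾ = {(x,y) ↦ (x + P(y), y)}` is a maximal abelian subgroup of the
elementary group `E`:  `E⁽²⁾` is an abelian subgroup of `E`, and any abelian subgroup of
`E` containing `E⁽²⁾` equals `E⁽²⁾`. -/
theorem e2_maximal_abelian_in_elem :
    E2Grp ≤ ElemGrp ∧
    (∀ a ∈ E2Grp, ∀ b ∈ E2Grp, a * b = b * a) ∧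
    (∀ K : Subgroup ↥AutC2, K ≤ ElemGrp → (∀ a ∈ K, ∀ b ∈ K, a * b = b * a) →
      E2Grp ≤ K → K = E2Grp) := by
  refine ⟨E2Grp_le_ElemGrp, E2Grp_mul_comm, fun K hKE hKab hE2K => le_antisymm ?_ hE2K⟩
  exact fun f hf => mem_E2Grp_of_mem_ElemGrp_of_commute (hKE hf)
    fun g hg => hKab g (hE2K hg) f hf
end
end
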